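/- For all α, β, γ, δ ∈ ℒ∨(𝕀) the inequality (α ⊕ β) ⊗ (γ ⊕ δ) ≤ α ⊕ ((β ⊗ γ) ⊕ δ) holds pointwise. -/
import Mathlib


noncomputable section

instance : Fact ((0:ℝ) ≤ 1) := ⟨zero_le_one⟩

/-- `𝕀` is the real unit interval `[0,1]`, a complete lattice. -/
notation "𝕀" => unitInterval

/-- `f^∧(x) = ⨅_{x < x'} f x'`, the meet-continuous closure data of `f`. -/
def mCl (f : 𝕀 → 𝕀) : 𝕀 → 𝕀 :=
  fun x => ⨅ y : {y : 𝕀 // x < y}, f y.1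

/-- `f^∨(x) = ⨆_{x' < x} f x'`, the join-continuous closure data of `f`. -/
def jCl (f : 𝕀 → 𝕀) : 𝕀 → 𝕀 :=
  fun x => ⨆ y : {y : 𝕀 // y.1 < x}, f y.1

/-- `f` is join-continuous: it preserves all suprema. -/
def JoinCont (f : 𝕀 → 𝕀) : Prop :=
  ∀ S : Set 𝕀, f (sSup S) = ⨆ x ∈ S, f x

/-- `f` is meet-continuous: it preserves all infima. -/
def MeetCont (f : 𝕀 → 𝕀) : Prop :=
  ∀ S : Set 𝕀, f (sInf S) = ⨅ x ∈ S, f x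

/-- The right adjoint `f^ρ` of a join-continuous `f`. -/
def radj (f : 𝕀 → 𝕀) : 𝕀 → 𝕀 := fun y => sSup {x | f x ≤ y}

/-- The left adjoint `g^λ` of a meet-continuous `g`. -/
def ladj (g : 𝕀 → 𝕀) : 𝕀 → 𝕀 := fun y => sInf {x | y ≤ g x}

/-- `f* := (f^ρ)^∨`. -/
def starF (f : 𝕀 → 𝕀) : 𝕀 → 𝕀 := jCl (radj f)

/-- `f ⊗ g := g ∘ f`. -/
def otimes (f g : 𝕀 → 𝕀) : 𝕀 → 𝕀 := g ∘ f

/-- `f ⊕ g := (g^∧ ∘ f^∧)^∨`. -/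
def oplus (f g : 𝕀 → 𝕀) : 𝕀 → 𝕀 := jCl (mCl g ∘ mCl f)

/-- A tuple is closed if `f_{i,j} ⊗ f_{j,k} ≤ f_{i,k}` for `i < j < k`. -/
def ClosedT (d : ℕ) (f : Fin d → Fin d → (𝕀 → 𝕀)) : Prop :=
  ∀ i j k : Fin d, i < j → j < k → ∀ x, otimes (f i j) (f j k) x ≤ f i k x

/-- A tuple is open if `f_{i,k} ≤ f_{i,j} ⊕ f_{j,k}` for `i < j < k`. -/
def OpenT (d : ℕ) (f : Fin d → Fin d → (𝕀 → 𝕀)) : Prop :=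
  ∀ i j k : Fin d, i < j → j < k → ∀ x, f i k x ≤ oplus (f i j) (f j k) x

/-- Pointwise order on the meaningful (`i < j`) entries of tuples. -/
def TLE (d : ℕ) (f g : Fin d → Fin d → (𝕀 → 𝕀)) : Prop :=
  ∀ i j : Fin d, i < j → ∀ x, f i j x ≤ g i j x

/-- Each meaningful entry of the tuple is join-continuous. -/
def TupleJC (d : ℕ) (f : Fin d → Fin d → (𝕀 → 𝕀)) : Prop :=
  ∀ i j : Fin d, i < j → JoinCont (f i j)

/-- `⊕`-value of a subdivision `ℓ₀ < ℓ₁ < … < ℓ_k`: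
`f_{ℓ₀,ℓ₁} ⊕ f_{ℓ₁,ℓ₂} ⊕ … ⊕ f_{ℓ_{k-1},ℓ_k}`. -/
def oplusChain {d : ℕ} (f : Fin d → Fin d → (𝕀 → 𝕀)) : List (Fin d) → (𝕀 → 𝕀)
  | [] => id
  | [_] => id
  | a :: b :: l => oplus (f a b) (oplusChain f (b :: l))

/-- Subdivisions of the interval `[i,j]`: strictly increasing lists from `i` to `j`. -/
def Subdiv (d : ℕ) (i j : Fin d) : Set (List (Fin d)) :=
  {L | L.Chain' (· < ·) ∧ L.head? = some i ∧ L.getLast? = some j}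

/-- The interior of a tuple: `interior(f)_{i,j}` is the infimum, over all subdivisions
`i = ℓ₀ < ℓ₁ < … < ℓ_k = j`, of `f_{ℓ₀,ℓ₁} ⊕ … ⊕ f_{ℓ_{k-1},ℓ_k}`. -/
def interiorT (d : ℕ) (f : Fin d → Fin d → (𝕀 → 𝕀)) : Fin d → Fin d → (𝕀 → 𝕀) :=
  fun i j => ⨅ L : Subdiv d i j, oplusChain f L.1

/-- The chain `C_f ⊆ 𝕀²` associated to a monotone `f : 𝕀 → 𝕀`. -/
def Cf2 (f : 𝕀 → 𝕀) : Set (𝕀 × 𝕀) :=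
  {p | jCl f p.1 ≤ p.2 ∧ p.2 ≤ mCl f p.1}

/-- `f_C^-(x) = ⨅ {y | (x,y) ∈ C}`. -/
def fCm (C : Set (𝕀 × 𝕀)) : 𝕀 → 𝕀 := fun x => sInf {y | (x, y) ∈ C}

/-- `f_C^+(x) = ⨆ {y | (x,y) ∈ C}`. -/
def fCp (C : Set (𝕀 × 𝕀)) : 𝕀 → 𝕀 := fun x => sSup {y | (x, y) ∈ C}

/-- Compatibility of a (fully extended) tuple: `f_{j,k} ∘ f_{i,j} ≤ f_{i,k}` for all `i,j,k`. -/
def Compatible (d : ℕ) (f : Fin d → Fin d → (𝕀 → 𝕀)) : Prop :=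
  ∀ i j k : Fin d, ∀ x, f j k (f i j x) ≤ f i k x

/-- The subset `C_f ⊆ 𝕀^d` associated to a compatible tuple. -/
def Cfd (d : ℕ) (f : Fin d → Fin d → (𝕀 → 𝕀)) : Set (Fin d → 𝕀) :=
  {x | ∀ i j : Fin d, f i j (x i) ≤ x j}

/-- `v(C)_{i,j}(x) = ⨅ {c_j | c ∈ C, c_i = x}`. -/
def vC (d : ℕ) (C : Set (Fin d → 𝕀)) (i j : Fin d) : 𝕀 → 𝕀 :=
  fun x => sInf {z | ∃ c ∈ C, c i = x ∧ c j = z}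

/-- Canonical extension of a tuple given on `i < j` to all pairs:
identity on the diagonal and `f_{j,i} := (f_{i,j})*` below it. -/
def extT (d : ℕ) (g : Fin d → Fin d → (𝕀 → 𝕀)) : Fin d → Fin d → (𝕀 → 𝕀) :=
  fun i j => if i < j then g i j else if j < i then starF (g j i) else id

/-- The one-step function `h_{x,y}`. -/
def oneStep (x y : 𝕀) : 𝕀 → 𝕀 := fun t => if t ≤ x then 0 else y


lemma mCl_mono_aux (f : 𝕀 → 𝕀) : Monotone (mCl f) := by
  intro x y hxy
  exact le_iInf fun z => iInf_le (fun w : {w : 𝕀 // x < w} => f w.1) ⟨z.1, lt_of_le_of_lt hxy z.2⟩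

lemma JoinCont.mono_aux {f : 𝕀 → 𝕀} (hf : JoinCont f) : Monotone f := by
  intro x y hxy
  have h := hf {x, y}
  rw [sSup_pair, sup_eq_right.mpr hxy] at h
  rw [h]
  exact le_iSup₂_of_le x (by simp) le_rfl

/-- `(α ⊕ β) ⊗ (γ ⊕ δ) ≤ α ⊕ ((β ⊗ γ) ⊕ δ)` pointwise. -/
theorem statement7 (a b c e : 𝕀 → 𝕀) (ha : JoinCont a) (hb : JoinCont b)
    (hc : JoinCont c) (he : JoinCont e) :
    ∀ x, otimes (oplus a b) (oplus c e) x ≤ oplus a (oplus (otimes b c) e) x := by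
  intro x
  simp only [otimes, oplus, Function.comp_apply, jCl]
  apply iSup_le
  rintro ⟨v, hv⟩
  -- hv : v < ⨆ (y : {y // y < x}), mCl b (mCl a y)
  obtain ⟨⟨u, hu⟩, huv⟩ := lt_iSup_iff.mp (show v < _ from hv)
  simp only [Function.comp_apply] at huv ⊢
  refine le_trans ?_ (le_iSup (fun y : {y : 𝕀 // y.1 < x} =>
    mCl (jCl (mCl e ∘ mCl (otimes b c))) (mCl a y.1)) ⟨u, hu⟩)
  -- goal : mCl e (mCl c v) ≤ mCl (jCl (mCl e ∘ mCl (otimes b c))) (mCl a u)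
  unfold mCl
  apply le_iInf
  rintro ⟨w', hw'⟩
  obtain ⟨t, ht1, ht2⟩ := exists_between hw'
  -- show ≤ jCl (...) w' via witness t < w'
  refine le_trans ?_ (le_iSup (fun s : {s : 𝕀 // s.1 < w'} =>
    (mCl e ∘ mCl (otimes b c)) s.1) ⟨t, ht2⟩)
  simp only [Function.comp_apply]
  apply mCl_mono_aux e
  -- mCl c v ≤ mCl (otimes b c) t
  apply le_iInf
  rintro ⟨t', ht'⟩
  have hvbt : v < b t := lt_of_lt_of_le huv
    (iInf_le (fun s : {s : 𝕀 // mCl a u < s} => b s.1) ⟨t, ht1⟩)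
  have hvbt' : v < b t' := lt_of_lt_of_le hvbt (hb.mono_aux ht'.le)
  exact iInf_le (fun s : {s : 𝕀 // v < s} => c s.1) ⟨b t', hvbt'⟩

end
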